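/- Let Q1, Q2 be real symmetric k×k matrices satisfying Condition 4 over ℝ: for every (ν1,ν2) ∈ ℝ² \ {(0,0)}, the matrix ν1Q1 + ν2Q2 has rank at least k−1. Then there exist constants c > 0 and C > 0, depending only on Q1 and Q2, with the following property: for every (ν1,ν2) ∈ ℝ² \ {(0,0)}, writing ν* = max(|ν1|,|ν2|) and letting ρ_1, …, ρ_k be the eigenvalues of ν1Q1 + ν2Q2 ordered so that |ρ_1| ≤ |ρ_2| ≤ … ≤ |ρ_k|, one has |ρ_2| ≥ c·ν* and |ρ_k| ≤ C·ν*. -/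

import Mathlib

open scoped BigOperators
open MeasureTheory Filter

noncomputable section

namespace Paper

/-- `e(t) = exp(2πit)`. -/
def e (t : ℝ) : ℂ := Complex.exp (2 * Real.pi * Complex.I * t)

/-- Value of the quadratic form with matrix `A` at `x`, i.e. `xᵀ A x`. -/
def Qf {k : ℕ} {R : Type*} [CommRing R] (A : Matrix (Fin k) (Fin k) R) (x : Fin k → R) : R :=
  dotProduct x (A.mulVec x)

/-- Value over `R` of the integral quadratic form with integer matrix `A`. -/
def Q {k : ℕ} (R : Type*) [CommRing R] (A : Matrix (Fin k) (Fin k) ℤ) (x : Fin k → R) : R :=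
  Qf (A.map (Int.cast : ℤ → R)) x

/-- The Jacobian matrix of a pair of quadratic forms at `x`, with rows `∇Q₁(x) = 2A₁x`,
`∇Q₂(x) = 2A₂x`. -/
def Jac {k : ℕ} {R : Type*} [CommRing R] (A₁ A₂ : Matrix (Fin k) (Fin k) R)
    (x : Fin k → R) : Matrix (Fin 2) (Fin k) R :=
  Matrix.of ![(2 : R) • A₁.mulVec x, (2 : R) • A₂.mulVec x]

/-- Condition 1: the projective variety `Q₁ = Q₂ = 0` is nonsingular over `ℚ̄`. -/
def Cond1 {k : ℕ} (A₁ A₂ : Matrix (Fin k) (Fin k) ℤ) : Prop :=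
  ∀ x : Fin k → AlgebraicClosure ℚ, x ≠ 0 →
    Q (AlgebraicClosure ℚ) A₁ x = 0 → Q (AlgebraicClosure ℚ) A₂ x = 0 →
    (Jac (A₁.map (Int.cast : ℤ → AlgebraicClosure ℚ)) (A₂.map Int.cast) x).rank = 2

/-- The determinant form `F(x,y) = det(x A₁ + y A₂)` over `ℤ`. -/
def Fform {k : ℕ} (A₁ A₂ : Matrix (Fin k) (Fin k) ℤ) (x y : ℤ) : ℤ :=
  (x • A₁ + y • A₂).det

/-- The determinant form `F(x,y) = det(x A₁ + y A₂)` over `ℝ`. -/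
def FformR {k : ℕ} (A₁ A₂ : Matrix (Fin k) (Fin k) ℤ) (x y : ℝ) : ℝ :=
  (x • A₁.map (Int.cast : ℤ → ℝ) + y • A₂.map (Int.cast : ℤ → ℝ)).det

/-- The weighted representation function `R_B(n₁,n₂)`. -/
def RB {k : ℕ} (A₁ A₂ : Matrix (Fin k) (Fin k) ℤ) (w : (Fin k → ℝ) → ℝ) (B : ℝ)
    (n₁ n₂ : ℤ) : ℝ :=
  ∑' x : Fin k → ℤ, if Q ℤ A₁ x = n₁ ∧ Q ℤ A₂ x = n₂ then w (fun i => (x i : ℝ) / B) else 0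

/-- `e_q(t) = e(t/q)`. -/
def eq' (q : ℕ) (t : ℤ) : ℂ := e ((t : ℝ) / q)

/-- The complete exponential sum `S_q(a₁,a₂)`. -/
def Sq {k : ℕ} (A₁ A₂ : Matrix (Fin k) (Fin k) ℤ) (q : ℕ) (a₁ a₂ : ℤ) : ℂ :=
  ∑ x : Fin k → Fin q,
    eq' q (a₁ * Q ℤ A₁ (fun i => ((x i : ℕ) : ℤ)) + a₂ * Q ℤ A₂ (fun i => ((x i : ℕ) : ℤ)))

/-- `T(n;q) = Σ_{1 ≤ a₁,a₂ ≤ q, (a₁,a₂,q)=1} S_q(a₁,a₂) e_q(-a₁n₁-a₂n₂)`. -/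
def T {k : ℕ} (A₁ A₂ : Matrix (Fin k) (Fin k) ℤ) (n₁ n₂ : ℤ) (q : ℕ) : ℂ :=
  ∑ a₁ ∈ Finset.Icc 1 q, ∑ a₂ ∈ Finset.Icc 1 q,
    if Nat.gcd (Nat.gcd a₁ a₂) q = 1 then
      Sq A₁ A₂ q (a₁ : ℤ) (a₂ : ℤ) * eq' q (-((a₁ : ℤ) * n₁ + (a₂ : ℤ) * n₂))
    else 0

/-- The singular series `𝔖(n₁,n₂) = Σ_{q ≥ 1} q^{-k} T(n;q)`. -/
def SingSeries {k : ℕ} (A₁ A₂ : Matrix (Fin k) (Fin k) ℤ) (n₁ n₂ : ℤ) : ℂ :=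
  ∑' q : ℕ, ((q : ℂ) ^ k)⁻¹ * T A₁ A₂ n₁ n₂ q

/-- The truncated singular integral `𝒥_w(μ;R)`. -/
def Jtrunc {k : ℕ} (A₁ A₂ : Matrix (Fin k) (Fin k) ℤ) (w : (Fin k → ℝ) → ℝ)
    (μ₁ μ₂ : ℝ) (R : ℝ) : ℂ :=
  ∫ θ₁ in (-R)..R, ∫ θ₂ in (-R)..R, ∫ x : Fin k → ℝ,
    e (θ₁ * (Q ℝ A₁ x - μ₁) + θ₂ * (Q ℝ A₂ x - μ₂)) * (w x : ℂ)

/-- The singular integral `𝒥_w(μ) = lim_{R → ∞} 𝒥_w(μ;R)`. -/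
def SingInt {k : ℕ} (A₁ A₂ : Matrix (Fin k) (Fin k) ℤ) (w : (Fin k → ℝ) → ℝ)
    (μ₁ μ₂ : ℝ) : ℂ :=
  limUnder atTop (Jtrunc A₁ A₂ w μ₁ μ₂)

/-!
Write `M(ν) = ν₁Q₁ + ν₂Q₂` and let `ρ` be its eigenvalues. The functions
`tr (M²) = ∑ ρᵢ²` and `tr (adj (M²)) = ∑ᵢ ∏_{j ≠ i} ρⱼ²` of `ν` are continuous and homogeneous of
degrees `2` and `2(k-1)`, and the rank condition (at most one `ρᵢ` vanishes) makes the second one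
positive for `ν ≠ 0`. Compactness of the unit sphere of `(ℝ², max-norm)` then gives
`tr (M²) ≤ C₀ ‖ν‖²`, which bounds every `|ρᵢ|`, and `tr (adj (M²)) ≥ c₀ ‖ν‖^(2(k-1))`. Each product
in the latter omits a single index, so it contains `ρ₁²` or `ρ₂²` and is at most
`ρ₂² (C₀ ‖ν‖²)^(k-2)` when `|ρ₁| ≤ |ρ₂|`; hence `c₀ ‖ν‖^(2(k-1)) ≤ k ρ₂² (C₀ ‖ν‖²)^(k-2)`.
-/

section SymmetricFunctions

open Finset

variable {ι R M : Type*} [Fintype ι] {ρ μ : ι → R}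

lemma map_univ_eq_of_prod_X_sub_C_eq [CommRing R] [IsDomain R]
    (h : ∏ i, (Polynomial.X - Polynomial.C (ρ i)) = ∏ i, (Polynomial.X - Polynomial.C (μ i))) :
    univ.val.map ρ = univ.val.map μ := by
  have hprod (ν : ι → R) : ∏ i, (Polynomial.X - Polynomial.C (ν i))
      = ((univ.val.map ν).map fun a => Polynomial.X - Polynomial.C a).prod := by
    rw [Multiset.map_map, prod_map_val]
    rfl
  simpa only [hprod, Polynomial.roots_multiset_prod_X_sub_C] using congrArg Polynomial.roots h

lemma sum_comp_eq_of_map_univ_eq [AddCommMonoid M] (h : univ.val.map ρ = univ.val.map μ)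
    (g : R → M) : ∑ i, g (ρ i) = ∑ i, g (μ i) := by
  simpa only [Multiset.map_map, sum_map_val, Function.comp_apply]
    using congrArg (fun s => (s.map g).sum) h

variable [DecidableEq ι]

lemma sum_prod_erase_sq_pos [CommRing R] [LinearOrder R] [IsStrictOrderedRing R] {f : ι → R}
    {i₀ : ι} (h : ∀ j ≠ i₀, f j ≠ 0) : 0 < ∑ i, ∏ j ∈ univ.erase i, f j ^ 2 :=
  sum_pos' (fun _ _ => prod_nonneg fun j _ => sq_nonneg (f j))
    ⟨i₀, mem_univ i₀, prod_pos fun j hj => sq_pos_of_ne_zero (h j (ne_of_mem_erase hj))⟩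

variable [Nonempty ι]

lemma sum_prod_erase_eq_esymm [CommSemiring R] (f : ι → R) :
    ∑ i, ∏ j ∈ univ.erase i, f j = (univ.val.map f).esymm (Fintype.card ι - 1) := by
  rw [esymm_map_val]
  refine sum_bij (fun i _ => {i}ᶜ) (fun i _ => ?_) (fun i _ j _ h => by simpa using h)
    (fun t ht => ?_) (fun i _ => by rw [compl_eq_univ_sdiff, sdiff_singleton_eq_erase])
  · simp [mem_powersetCard, card_compl]
  · rw [mem_powersetCard] at ht
    have hcard : tᶜ.card = 1 := by
      have := Fintype.card_pos (α := ι)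
      rw [card_compl, ht.2]
      omega
    obtain ⟨a, ha⟩ := card_eq_one.mp hcard
    exact ⟨a, mem_univ a, by rw [← ha, compl_compl]⟩

lemma sum_prod_erase_comp_eq_of_map_univ_eq [CommSemiring M]
    (h : univ.val.map ρ = univ.val.map μ) (g : R → M) :
    ∑ i, ∏ j ∈ univ.erase i, g (ρ j) = ∑ i, ∏ j ∈ univ.erase i, g (μ j) := by
  rw [sum_prod_erase_eq_esymm, sum_prod_erase_eq_esymm, ← Function.comp_def g ρ,
    ← Function.comp_def g μ, ← Multiset.map_map, ← Multiset.map_map, h]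

lemma exists_forall_ne_ne_zero_of_card_sub_one_le [Zero R] [DecidableEq R] {f : ι → R}
    (h : Fintype.card ι - 1 ≤ Fintype.card {i // f i ≠ 0}) : ∃ i₀, ∀ j ≠ i₀, f j ≠ 0 := by
  by_contra! hzero
  obtain ⟨a⟩ := ‹Nonempty ι›
  obtain ⟨b, hba, hb⟩ := hzero a
  obtain ⟨c, hcb, hc⟩ := hzero b
  have htwo : 1 < Fintype.card {i // f i = 0} :=
    Fintype.one_lt_card_iff.mpr ⟨⟨b, hb⟩, ⟨c, hc⟩, fun h => hcb (congrArg Subtype.val h).symm⟩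
  have hcompl : Fintype.card {i // f i ≠ 0} = Fintype.card ι - Fintype.card {i // f i = 0} :=
    Fintype.card_subtype_compl _
  have hle := Fintype.card_subtype_le (fun i => f i = 0)
  omega

end SymmetricFunctions

section HermitianInvariants

open Finset Matrix Polynomial

variable {n : Type*} [Fintype n] [DecidableEq n]

lemma trace_conj_unitary {R : Type*} [CommRing R] [StarRing R] (U : unitary (Matrix n n R))
    (B : Matrix n n R) : ((U : Matrix n n R) * B * star (U : Matrix n n R)).trace = B.trace := by
  rw [trace_mul_cycle, Unitary.coe_star_mul_self, one_mul]

lemma trace_adjugate_conj_unitary {R : Type*} [CommRing R] [StarRing R]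
    (U : unitary (Matrix n n R)) (B : Matrix n n R) :
    (adjugate ((U : Matrix n n R) * B * star (U : Matrix n n R))).trace = (adjugate B).trace := by
  rw [adjugate_mul_distrib, adjugate_mul_distrib, ← mul_assoc, trace_mul_cycle,
    ← adjugate_mul_distrib, Unitary.coe_star_mul_self, adjugate_one, one_mul]

variable {A : Matrix n n ℝ} (hA : A.IsHermitian) {ρ : n → ℝ}
include hA

lemma mul_self_eq_conj_diagonal :
    A * A = hA.eigenvectorUnitary * diagonal (fun i => hA.eigenvalues i ^ 2) *
      star (hA.eigenvectorUnitary : Matrix n n ℝ) := by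
  conv_lhs => rw [hA.spectral_theorem, ← map_mul, diagonal_mul_diagonal]
  simp [sq]

lemma map_univ_eq_eigenvalues_of_charpoly_eq (hρ : A.charpoly = ∏ i, (X - C (ρ i))) :
    univ.val.map ρ = univ.val.map hA.eigenvalues :=
  map_univ_eq_of_prod_X_sub_C_eq (hρ.symm.trans (by simpa using hA.charpoly_eq))

lemma trace_mul_self_eq_sum_sq (hρ : A.charpoly = ∏ i, (X - C (ρ i))) :
    (A * A).trace = ∑ i, ρ i ^ 2 := by
  rw [mul_self_eq_conj_diagonal hA, trace_conj_unitary, trace_diagonal]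
  exact (sum_comp_eq_of_map_univ_eq (map_univ_eq_eigenvalues_of_charpoly_eq hA hρ) (· ^ 2)).symm

lemma trace_adjugate_mul_self_eq_sum_prod_erase_sq [Nonempty n]
    (hρ : A.charpoly = ∏ i, (X - C (ρ i))) :
    (adjugate (A * A)).trace = ∑ i, ∏ j ∈ univ.erase i, ρ j ^ 2 := by
  rw [mul_self_eq_conj_diagonal hA, trace_adjugate_conj_unitary, adjugate_diagonal,
    trace_diagonal]
  exact (sum_prod_erase_comp_eq_of_map_univ_eq
    (map_univ_eq_eigenvalues_of_charpoly_eq hA hρ) (· ^ 2)).symm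

lemma trace_adjugate_mul_self_pos [Nonempty n] (hrank : Fintype.card n - 1 ≤ A.rank) :
    0 < (adjugate (A * A)).trace := by
  rw [hA.rank_eq_card_non_zero_eigs] at hrank
  obtain ⟨i₀, hi₀⟩ := exists_forall_ne_ne_zero_of_card_sub_one_le hrank
  rw [trace_adjugate_mul_self_eq_sum_prod_erase_sq hA (by simpa using hA.charpoly_eq)]
  exact sum_prod_erase_sq_pos hi₀

end HermitianInvariants

section Homogeneous

variable {E : Type*} [NormedAddCommGroup E] [NormedSpace ℝ E] {f : E → ℝ}
  {d : ℕ}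

lemma exists_mem_sphere_eq_norm_pow_mul_of_homogeneous
    (hhom : ∀ t : ℝ, 0 < t → ∀ x, f (t • x) = t ^ d * f x) {x : E} (hx : x ≠ 0) :
    ∃ u ∈ Metric.sphere (0 : E) 1, f x = ‖x‖ ^ d * f u := by
  refine ⟨‖x‖⁻¹ • x, ?_, ?_⟩
  · rw [mem_sphere_zero_iff_norm, norm_smul, norm_inv, norm_norm,
      inv_mul_cancel₀ (norm_ne_zero_iff.mpr hx)]
  · rw [← hhom _ (norm_pos_iff.mpr hx), smul_inv_smul₀ (norm_ne_zero_iff.mpr hx)]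

lemma exists_le_mul_norm_pow_of_homogeneous [ProperSpace E] (hf : Continuous f)
    (hhom : ∀ t : ℝ, 0 < t → ∀ x, f (t • x) = t ^ d * f x) :
    ∃ C > 0, ∀ x ≠ 0, f x ≤ C * ‖x‖ ^ d := by
  obtain ⟨C, hC⟩ := (isCompact_sphere (0 : E) 1).exists_bound_of_continuousOn hf.continuousOn
  refine ⟨max C 1, by positivity, fun x hx => ?_⟩
  obtain ⟨u, hu, hfx⟩ := exists_mem_sphere_eq_norm_pow_mul_of_homogeneous hhom hx
  rw [hfx, mul_comm]
  gcongr
  exact (le_abs_self _).trans ((hC u hu).trans (le_max_left C 1))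

lemma exists_pos_mul_norm_pow_le_of_homogeneous [ProperSpace E] [Nontrivial E] (hf : Continuous f)
    (hhom : ∀ t : ℝ, 0 < t → ∀ x, f (t • x) = t ^ d * f x) (hpos : ∀ x ≠ 0, 0 < f x) :
    ∃ c > 0, ∀ x ≠ 0, c * ‖x‖ ^ d ≤ f x := by
  obtain ⟨x₀, hx₀, hmin⟩ := (isCompact_sphere (0 : E) 1).exists_isMinOn
    (NormedSpace.sphere_nonempty.mpr zero_le_one) hf.continuousOn
  refine ⟨f x₀, hpos x₀ (ne_zero_of_mem_unit_sphere ⟨x₀, hx₀⟩), fun x hx => ?_⟩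
  obtain ⟨u, hu, hfx⟩ := exists_mem_sphere_eq_norm_pow_mul_of_homogeneous hhom hx
  rw [hfx, mul_comm]
  gcongr
  exact hmin hu

end Homogeneous

open Finset in
lemma sum_prod_erase_sq_le {k : ℕ} (hk : 2 ≤ k) {ρ : Fin k → ℝ}
    (hsort : ∀ i j : Fin k, i ≤ j → |ρ i| ≤ |ρ j|) {D : ℝ} (hD : ∀ i, ρ i ^ 2 ≤ D) :
    ∑ i, ∏ j ∈ univ.erase i, ρ j ^ 2 ≤ k * (ρ ⟨1, hk⟩ ^ 2 * D ^ (k - 2)) := by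
  have hterm (i : Fin k) : ∏ j ∈ univ.erase i, ρ j ^ 2 ≤ ρ ⟨1, hk⟩ ^ 2 * D ^ (k - 2) := by
    obtain ⟨j₀, hj₀i, hj₀⟩ : ∃ j₀ : Fin k, j₀ ≠ i ∧ j₀ ≤ ⟨1, hk⟩ := by
      by_cases hi : i = ⟨0, by omega⟩
      · exact ⟨⟨1, hk⟩, by simp [hi, Fin.ext_iff], le_rfl⟩
      · exact ⟨⟨0, by omega⟩, Ne.symm hi, by simp [Fin.le_def]⟩
    have hj₀mem : j₀ ∈ univ.erase i := mem_erase.mpr ⟨hj₀i, mem_univ j₀⟩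
    have hcard : ((univ.erase i).erase j₀).card = k - 2 := by
      rw [card_erase_of_mem hj₀mem, card_erase_of_mem (mem_univ i), card_univ, Fintype.card_fin]
      omega
    rw [← mul_prod_erase _ _ hj₀mem]
    refine mul_le_mul (sq_le_sq.mpr (hsort _ _ hj₀)) ?_ (prod_nonneg fun j _ => sq_nonneg (ρ j))
      (sq_nonneg _)
    calc ∏ j ∈ (univ.erase i).erase j₀, ρ j ^ 2 ≤ ∏ _j ∈ (univ.erase i).erase j₀, D :=
          prod_le_prod (fun j _ => sq_nonneg (ρ j)) (fun j _ => hD j)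
      _ = D ^ (k - 2) := by rw [prod_const, hcard]
  calc ∑ i, ∏ j ∈ univ.erase i, ρ j ^ 2 ≤ ∑ _i : Fin k, ρ ⟨1, hk⟩ ^ 2 * D ^ (k - 2) :=
        sum_le_sum fun i _ => hterm i
    _ = k * (ρ ⟨1, hk⟩ ^ 2 * D ^ (k - 2)) := by simp

lemma sqrt_div_mul_le_abs {c C N s a : ℝ} {m : ℕ} (hCN : 0 < N * C ^ m) (hs : 0 < s)
    (h : c * s ^ (2 * m + 2) ≤ N * (a ^ 2 * (C * s ^ 2) ^ m)) :
    √(c / (N * C ^ m)) * s ≤ |a| := by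
  have hsq : c * s ^ 2 ≤ N * C ^ m * a ^ 2 := by
    refine le_of_mul_le_mul_left ?_ (pow_pos (pow_pos hs 2) m)
    calc (s ^ 2) ^ m * (c * s ^ 2) = c * s ^ (2 * m + 2) := by ring
      _ ≤ N * (a ^ 2 * (C * s ^ 2) ^ m) := h
      _ = (s ^ 2) ^ m * (N * C ^ m * a ^ 2) := by ring
  have hdiv : c / (N * C ^ m) * s ^ 2 ≤ a ^ 2 := by
    rw [div_mul_eq_mul_div, div_le_iff₀ hCN]
    linarith
  calc √(c / (N * C ^ m)) * s = √(c / (N * C ^ m) * s ^ 2) := by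
        rw [Real.sqrt_mul' _ (sq_nonneg s), Real.sqrt_sq hs.le]
    _ ≤ √(a ^ 2) := Real.sqrt_le_sqrt hdiv
    _ = |a| := Real.sqrt_sq_eq_abs a

section Pencil

open Matrix

variable {n : Type*}

def pencil (Q₁ Q₂ : Matrix n n ℝ) (ν : ℝ × ℝ) : Matrix n n ℝ := ν.1 • Q₁ + ν.2 • Q₂

variable (Q₁ Q₂ : Matrix n n ℝ)

lemma continuous_pencil : Continuous (pencil Q₁ Q₂) := by
  unfold pencil
  fun_prop

lemma pencil_smul (t : ℝ) (ν : ℝ × ℝ) : pencil Q₁ Q₂ (t • ν) = t • pencil Q₁ Q₂ ν := by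
  simp [pencil, smul_add, smul_smul]

variable {Q₁ Q₂} in
lemma isHermitian_pencil (hQ₁ : Q₁.IsSymm) (hQ₂ : Q₂.IsSymm) (ν : ℝ × ℝ) :
    (pencil Q₁ Q₂ ν).IsHermitian :=
  isHermitian_iff_isSymm.mpr ((hQ₁.smul ν.1).add (hQ₂.smul ν.2))

end Pencil

section Scaling

open Matrix

variable {n : Type*} [Fintype n] (t : ℝ) (A : Matrix n n ℝ)

lemma trace_smul_mul_self : ((t • A) * (t • A)).trace = t ^ 2 * (A * A).trace := by
  rw [smul_mul_smul_comm, trace_smul, smul_eq_mul, sq]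

lemma trace_adjugate_smul_mul_self [DecidableEq n] :
    (adjugate ((t • A) * (t • A))).trace
      = t ^ (2 * (Fintype.card n - 1)) * (adjugate (A * A)).trace := by
  rw [smul_mul_smul_comm, adjugate_smul, trace_smul, smul_eq_mul, ← sq, ← pow_mul]

end Scaling

open Polynomial in
/-- **Lemma 2.5**: under Condition 4 over `ℝ`, for any nontrivial pair `(ν₁,ν₂)` at most one
eigenvalue of `ν₁Q₁ + ν₂Q₂` is small: ordering the eigenvalues by absolute value,
`|ρ₂| ≫ ν*` and `|ρ_k| ≪ ν*` where `ν* = max(|ν₁|,|ν₂|)`. -/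
theorem eigenvalue_bounds (k : ℕ) (hk : 2 ≤ k)
    (Q₁ Q₂ : Matrix (Fin k) (Fin k) ℝ) (hQ₁ : Q₁.IsSymm) (hQ₂ : Q₂.IsSymm)
    (hcond4 : ∀ ν₁ ν₂ : ℝ, ¬(ν₁ = 0 ∧ ν₂ = 0) → k - 1 ≤ (ν₁ • Q₁ + ν₂ • Q₂).rank) :
    ∃ c C : ℝ, 0 < c ∧ 0 < C ∧ ∀ ν₁ ν₂ : ℝ, ¬(ν₁ = 0 ∧ ν₂ = 0) →
      ∀ ρ : Fin k → ℝ,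
        (ν₁ • Q₁ + ν₂ • Q₂).charpoly = ∏ i, (X - Polynomial.C (ρ i)) →
        (∀ i j : Fin k, i ≤ j → |ρ i| ≤ |ρ j|) →
        c * max |ν₁| |ν₂| ≤ |ρ ⟨1, by omega⟩| ∧ |ρ ⟨k - 1, by omega⟩| ≤ C * max |ν₁| |ν₂| := by
  have : NeZero k := ⟨by omega⟩
  have hherm := isHermitian_pencil hQ₁ hQ₂
  have hcont := continuous_pencil Q₁ Q₂
  obtain ⟨C₀, hC₀, hupper⟩ := exists_le_mul_norm_pow_of_homogeneous (d := 2)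
    (hcont.matrix_mul hcont).matrix_trace
    (fun t _ ν => by simp only [pencil_smul, trace_smul_mul_self])
  obtain ⟨c₀, hc₀, hlower⟩ := exists_pos_mul_norm_pow_le_of_homogeneous (d := 2 * (k - 1))
    (hcont.matrix_mul hcont).matrix_adjugate.matrix_trace
    (fun t _ ν => by simp only [pencil_smul, trace_adjugate_smul_mul_self, Fintype.card_fin])
    (fun ν hν => trace_adjugate_mul_self_pos (hherm ν)
      (by
        rw [Fintype.card_fin]
        exact hcond4 ν.1 ν.2 (by simpa [Prod.ext_iff] using hν)))
  refine ⟨√(c₀ / (k * C₀ ^ (k - 2))), √C₀, by positivity, by positivity,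
    fun ν₁ ν₂ hν ρ hρ hsort => ?_⟩
  have hν0 : (ν₁, ν₂) ≠ 0 := by simpa [Prod.ext_iff] using hν
  have hsq (i : Fin k) : ρ i ^ 2 ≤ C₀ * ‖(ν₁, ν₂)‖ ^ 2 :=
    (Finset.single_le_sum (fun j _ => sq_nonneg (ρ j)) (Finset.mem_univ i)).trans
      ((trace_mul_self_eq_sum_sq (hherm (ν₁, ν₂)) hρ).symm.trans_le (hupper _ hν0))
  rw [show max |ν₁| |ν₂| = ‖(ν₁, ν₂)‖ by simp [Prod.norm_def]]
  refine ⟨sqrt_div_mul_le_abs (by positivity) (norm_pos_iff.mpr hν0) ?_, ?_⟩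
  · rw [show 2 * (k - 2) + 2 = 2 * (k - 1) by omega]
    exact (hlower _ hν0).trans ((trace_adjugate_mul_self_eq_sum_prod_erase_sq (hherm (ν₁, ν₂))
      hρ).trans_le (sum_prod_erase_sq_le hk hsort hsq))
  · calc |ρ ⟨k - 1, by omega⟩| ≤ √(C₀ * ‖(ν₁, ν₂)‖ ^ 2) := Real.abs_le_sqrt (hsq _)
      _ = √C₀ * ‖(ν₁, ν₂)‖ := by rw [Real.sqrt_mul hC₀.le, Real.sqrt_sq (norm_nonneg _)]

end Paper
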